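/- arXiv:1508.04206 — 5 statements merged into one kernel-verified Lean document; each statement's English description precedes it below -/
import Mathlib

section
/- If A is an n×n real Hurwitz matrix, then there exist constants k > 0 and λ > 0 such that ‖e^{At}‖ ≤ k e^{−λ t} for all t ≥ 0. -/
open Matrix

attribute [local instance] Matrix.linftyOpNormedAddCommGroup Matrix.linftyOpNormedRing
  Matrix.linftyOpNormedAlgebra

def IsHurwitz {n : ℕ} (A : Matrix (Fin n) (Fin n) ℝ) : Prop :=
  ∀ z ∈ spectrum ℂ (A.map Complex.ofReal), z.re < 0

/-!
Shift `A` by a small `μ > 0` so that `B = A + μ` is still Hurwitz. Each eigenvalue of `exp B` is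
`e^λ` for an eigenvalue `λ` of `B`, read off a common eigenvector of the commuting pair `B`,
`exp B`; hence the spectral radius of `exp B` is `< 1`, and Gelfand's formula gives
`‖exp (m B)‖ < 1` for some `m ≥ 1`. Writing `t = s + q m` with `s ∈ [0, m]` bounds `‖exp (t B)‖`
uniformly in `t ≥ 0`, and `exp (t A) = e^{-μ t} exp (t B)`.
-/

open NormedSpace Filter Topology Pointwise

theorem Set.Finite.exists_pos_forall_add_neg {α : Type*} {S : Set α} (hS : S.Finite) {f : α → ℝ}
    (hf : ∀ x ∈ S, f x < 0) : ∃ ε > 0, ∀ x ∈ S, f x + ε < 0 := by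
  have hev : ∀ᶠ ε in 𝓝[>] (0 : ℝ), ∀ x ∈ S, f x + ε < 0 :=
    hS.eventually_all.2 fun x hx =>
      nhdsWithin_le_nhds <| (continuous_const.add continuous_id).tendsto' 0 (f x) (add_zero _)
        |>.eventually (gt_mem_nhds (hf x hx))
  obtain ⟨ε, hε, hεS⟩ := (hev.and self_mem_nhdsWithin).exists
  exact ⟨ε, hεS, hε⟩

theorem norm_mul_pow_le_mul_norm_pow {R : Type*} [SeminormedRing R] (x y : R) (q : ℕ) :
    ‖x * y ^ q‖ ≤ ‖x‖ * ‖y‖ ^ q := by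
  induction q with
  | zero => simp
  | succ q ih =>
    calc ‖x * y ^ (q + 1)‖ = ‖x * y ^ q * y‖ := by rw [pow_succ, mul_assoc]
      _ ≤ ‖x * y ^ q‖ * ‖y‖ := norm_mul_le _ _
      _ ≤ ‖x‖ * ‖y‖ ^ q * ‖y‖ := by gcongr
      _ = ‖x‖ * ‖y‖ ^ (q + 1) := by ring

section RealBanachAlgebra

variable {𝔸 : Type*} [NormedRing 𝔸] [NormedAlgebra ℝ 𝔸] [CompleteSpace 𝔸]

theorem exp_add_nat_mul_smul (a : 𝔸) (s T : ℝ) (q : ℕ) :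
    exp ((s + q * T) • a) = exp (s • a) * exp (T • a) ^ q := by
  -- the algebraic lemmas about `exp` are stated for normed `ℚ`-algebras
  let := NormedAlgebra.restrictScalars ℚ ℝ 𝔸
  rw [add_smul, NormedSpace.exp_add_of_commute (((Commute.refl a).smul_left s).smul_right _),
    mul_smul, Nat.cast_smul_eq_nsmul, NormedSpace.exp_nsmul]

theorem exp_smul_add_algebraMap (a : 𝔸) (t μ : ℝ) :
    exp (t • (a + algebraMap ℝ 𝔸 μ)) = Real.exp (μ * t) • exp (t • a) := by
  let := NormedAlgebra.restrictScalars ℚ ℝ 𝔸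
  rw [smul_add, Algebra.smul_def t (algebraMap ℝ 𝔸 μ), ← map_mul,
    NormedSpace.exp_add_of_commute (Algebra.commute_algebraMap_right _ _), ← algebraMap_exp_comm,
    ← Real.exp_eq_exp_ℝ, ← Algebra.commutes, ← Algebra.smul_def, mul_comm]

theorem exists_norm_exp_smul_le_of_norm_exp_smul_le_one {a : 𝔸} {T : ℝ} (hT : 0 < T)
    (ha : ‖exp (T • a)‖ ≤ 1) : ∃ K, ∀ t : ℝ, 0 ≤ t → ‖exp (t • a)‖ ≤ K := by
  let := NormedAlgebra.restrictScalars ℚ ℝ 𝔸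
  obtain ⟨K, hK⟩ := (isCompact_Icc (a := 0) (b := T)).exists_bound_of_continuousOn
    (f := fun s : ℝ => exp (s • a))
    (exp_continuous.comp (continuous_id.smul continuous_const)).continuousOn
  have hK0 : 0 ≤ K := (norm_nonneg _).trans (hK 0 ⟨le_rfl, hT.le⟩)
  refine ⟨K, fun t ht => ?_⟩
  set q := ⌊t / T⌋₊
  have hqT : q * T ≤ t := (le_div_iff₀ hT).1 (Nat.floor_le (div_nonneg ht hT.le))
  have htq : t < (q + 1) * T := (div_lt_iff₀ hT).1 (Nat.lt_floor_add_one _)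
  calc ‖exp (t • a)‖ = ‖exp ((t - q * T) • a) * exp (T • a) ^ q‖ := by
        rw [← exp_add_nat_mul_smul, sub_add_cancel]
    _ ≤ ‖exp ((t - q * T) • a)‖ * ‖exp (T • a)‖ ^ q := norm_mul_pow_le_mul_norm_pow _ _ _
    _ ≤ K * 1 ^ q := by
        gcongr
        exact hK _ ⟨by linarith, by linarith⟩
    _ = K := by rw [one_pow, mul_one]

theorem exists_norm_exp_smul_le_of_norm_exp_smul_add_le_one {a : 𝔸} {μ T : ℝ} (hT : 0 < T)
    (ha : ‖exp (T • (a + algebraMap ℝ 𝔸 μ))‖ ≤ 1) :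
    ∃ k > 0, ∀ t : ℝ, 0 ≤ t → ‖exp (t • a)‖ ≤ k * Real.exp (-μ * t) := by
  obtain ⟨K, hK⟩ := exists_norm_exp_smul_le_of_norm_exp_smul_le_one hT ha
  refine ⟨max K 1, lt_max_of_lt_right one_pos, fun t ht => ?_⟩
  have hshift : exp (t • a) = Real.exp (-μ * t) • exp (t • (a + algebraMap ℝ 𝔸 μ)) := by
    rw [exp_smul_add_algebraMap, smul_smul, ← Real.exp_add, neg_mul, neg_add_cancel,
      Real.exp_zero, one_smul]
  calc ‖exp (t • a)‖ = Real.exp (-μ * t) * ‖exp (t • (a + algebraMap ℝ 𝔸 μ))‖ := by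
        rw [hshift, norm_smul, Real.norm_of_nonneg (Real.exp_pos _).le]
    _ ≤ Real.exp (-μ * t) * max K 1 := by
        gcongr
        exact (hK t ht).trans (le_max_left _ _)
    _ = max K 1 * Real.exp (-μ * t) := mul_comm _ _

end RealBanachAlgebra

theorem exists_norm_pow_lt_one_of_spectralRadius_lt_one {A : Type*} [NormedRing A]
    [NormedAlgebra ℂ A] [CompleteSpace A] {x : A} (hx : spectralRadius ℂ x < 1) :
    ∃ m : ℕ, 0 < m ∧ ‖x ^ m‖ < 1 := by
  obtain ⟨m, hlt, hm⟩ := ((spectrum.pow_norm_pow_one_div_tendsto_nhds_spectralRadius x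
    ).eventually_lt_const hx |>.and (eventually_gt_atTop 0)).exists
  refine ⟨m, hm, ?_⟩
  rwa [ENNReal.ofReal_lt_one, Real.rpow_lt_one_iff' (norm_nonneg _) (by positivity)] at hlt

theorem Module.End.exists_hasEigenvector_of_commute {K V : Type*} [Field K] [IsAlgClosed K]
    [AddCommGroup V] [Module K V] [FiniteDimensional K V] {f g : Module.End K V}
    (hfg : Commute f g) {z : K} (hz : g.HasEigenvalue z) :
    ∃ μ v, f.HasEigenvector μ v ∧ g v = z • v := by
  have : Nontrivial (g.eigenspace z) := Submodule.nontrivial_iff_ne_bot.2 hz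
  have hmaps := mapsTo_genEigenspace_of_comm hfg.symm z 1
  obtain ⟨μ, hμ⟩ := Module.End.exists_eigenvalue (f.restrict hmaps)
  obtain ⟨v, hv⟩ := hμ.exists_hasEigenvector
  refine ⟨μ, v, ⟨mem_eigenspace_iff.2 ?_, ?_⟩, mem_eigenspace_iff.1 v.2⟩
  · rw [← LinearMap.coe_restrict_apply hmaps, mem_eigenspace_iff.1 hv.1, Submodule.coe_smul]
  · simpa using hv.2

namespace Matrix

variable {ι : Type*} [Fintype ι] [DecidableEq ι]

theorem linfty_opNorm_map_of_norm_eq {m n α β : Type*} [Fintype m] [Fintype n]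
    [NormedAddCommGroup α] [NormedAddCommGroup β] {f : α → β}
    (hf : ∀ x, ‖f x‖ = ‖x‖) (M : Matrix m n α) : ‖M.map f‖ = ‖M‖ := by
  have hf' : ∀ x, ‖f x‖₊ = ‖x‖₊ := fun x => NNReal.eq (hf x)
  simp only [linfty_opNorm_def, map_apply, hf']

theorem map_ofReal_exp (M : Matrix ι ι ℝ) :
    (exp M).map Complex.ofReal = exp (M.map Complex.ofReal) :=
  NormedSpace.map_exp Complex.ofRealHom.mapMatrix
    (continuous_id.matrix_map Complex.continuous_ofReal) M

theorem exp_mulVec_of_mulVec_eq_smul {B : Matrix ι ι ℂ} {v : ι → ℂ} {μ : ℂ}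
    (h : B *ᵥ v = μ • v) : exp B *ᵥ v = Complex.exp μ • v := by
  have hpow : ∀ k : ℕ, B ^ k *ᵥ v = μ ^ k • v := by
    intro k
    induction k with
    | zero => simp
    | succ k ih => rw [pow_succ, ← mulVec_mulVec, h, mulVec_smul, ih, smul_smul, pow_succ']
  have hB := (exp_series_hasSum_exp' (𝕂 := ℂ) B).map (mulVec.addMonoidHomLeft v)
    (continuous_id.matrix_mulVec continuous_const)
  have hμ := (exp_series_hasSum_exp' (𝕂 := ℂ) μ).smul_const v
  rw [Complex.exp_eq_exp_ℂ]
  refine hB.unique (hμ.congr_fun fun k => ?_)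
  simp [mulVec.addMonoidHomLeft, smul_mulVec, hpow, smul_smul]

theorem spectrum_exp_subset (B : Matrix ι ι ℂ) :
    spectrum ℂ (exp B) ⊆ Complex.exp '' spectrum ℂ B := by
  intro z hz
  simp only [← AlgEquiv.spectrum_eq (toLinAlgEquiv' (R := ℂ) (n := ι)),
    ← Module.End.hasEigenvalue_iff_mem_spectrum, Set.mem_image] at hz ⊢
  have hcomm : Commute (toLinAlgEquiv' B) (toLinAlgEquiv' (exp B)) :=
    ((Commute.refl B).exp_right).map _
  obtain ⟨μ, v, hv, hzv⟩ := Module.End.exists_hasEigenvector_of_commute hcomm hz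
  refine ⟨μ, Module.End.hasEigenvalue_of_hasEigenvector hv, smul_left_injective ℂ hv.2 ?_⟩
  have hBv : B *ᵥ v = μ • v := by simpa using Module.End.mem_eigenspace_iff.1 hv.1
  simpa [← exp_mulVec_of_mulVec_eq_smul hBv] using hzv

theorem spectralRadius_exp_lt_one {B : Matrix ι ι ℂ} (hB : ∀ z ∈ spectrum ℂ B, z.re < 0) :
    spectralRadius ℂ (exp B) < 1 := by
  rcases (spectrum ℂ (exp B)).eq_empty_or_nonempty with h | h
  · simp [spectralRadius, h]
  refine_lift spectrum.spectralRadius_lt_of_forall_lt_of_nonempty h (r := 1) fun z hz => ?_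
  obtain ⟨w, hw, rfl⟩ := spectrum_exp_subset B hz
  rw [← NNReal.coe_lt_coe, coe_nnnorm, Complex.norm_exp]
  simpa using hB w hw

theorem spectrum_map_ofReal_add_algebraMap (A : Matrix ι ι ℝ) (μ : ℝ) :
    spectrum ℂ ((A + algebraMap ℝ (Matrix ι ι ℝ) μ).map Complex.ofReal) =
      {(μ : ℂ)} + spectrum ℂ (A.map Complex.ofReal) := by
  rw [spectrum.singleton_add_eq, add_comm]
  congr 1
  ext i j
  simp only [map_apply, add_apply, algebraMap_matrix_apply, Algebra.algebraMap_self,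
    Real.ringHom_apply, Complex.ofReal_add, RingHom.id_apply, add_left_inj]
  split_ifs <;> simp

end Matrix

/-- If `A` is Hurwitz then `‖exp (t A)‖ ≤ k e^{-λ t}` for some `k, λ > 0`. -/
theorem hurwitz_exp_decay {n : ℕ} (A : Matrix (Fin n) (Fin n) ℝ)
    (hA : IsHurwitz A) :
    ∃ k > (0 : ℝ), ∃ lam > (0 : ℝ), ∀ t : ℝ, 0 ≤ t →
      ‖NormedSpace.exp (t • A)‖ ≤ k * Real.exp (-lam * t) := by
  obtain ⟨μ, hμ, hAμ⟩ := (finite_spectrum (A.map Complex.ofReal)).exists_pos_forall_add_neg hA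
  set B := A + algebraMap ℝ (Matrix (Fin n) (Fin n) ℝ) μ
  have hB : ∀ z ∈ spectrum ℂ (B.map Complex.ofReal), z.re < 0 := by
    rw [Matrix.spectrum_map_ofReal_add_algebraMap]
    rintro _ ⟨_, rfl, w, hw, rfl⟩
    simpa [add_comm] using hAμ w hw
  have hρ := Matrix.spectralRadius_exp_lt_one hB
  obtain ⟨m, hm, hlt⟩ := exists_norm_pow_lt_one_of_spectralRadius_lt_one hρ
  have hmB : ‖exp ((m : ℝ) • B)‖ ≤ 1 := by
    have hmap : (exp B ^ m).map Complex.ofReal = exp (B.map Complex.ofReal) ^ m := by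
      rw [← map_ofReal_exp]
      exact map_pow Complex.ofRealHom.mapMatrix _ m
    rw [Nat.cast_smul_eq_nsmul, Matrix.exp_nsmul, ← linfty_opNorm_map_of_norm_eq Complex.norm_real,
      hmap]
    exact hlt.le
  obtain ⟨k, hk, hdecay⟩ :=
    exists_norm_exp_smul_le_of_norm_exp_smul_add_le_one (Nat.cast_pos.2 hm) hmB
  exact ⟨k, hk, μ, hμ, hdecay⟩
end

section
/- Consider the linear plant ẋ = A x + B u + E v, e = C x + D u + F v with exosystem v̇ = S v. Suppose K₁ is such that A + B K₁ is Hurwitz, and (X, U) solve the regulator equations X S = A X + B U + E and 0 = C X + D U + F. Then under the full-information control u = K₁ x + K₂ v with K₂ = U − K₁ X, the error coordinate x̄ = x − X v satisfies ẋ̄ = (A + B K₁) x̄ and e = (C + D K₁) x̄, and hence e(t) → 0 as t → ∞ for every initial condition. -/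
open Matrix Filter Topology

/-!
In the coordinate `x̄ = x - X v` the regulator equations cancel every term in `v`, leaving
`ẋ̄ = (A + B K₁) x̄` and `e = (C + D K₁) x̄`; this is pure matrix algebra.
For the decay, uniqueness of ODE solutions gives `x̄ t = exp (t (A + B K₁)) x̄ 0`. Over `ℂ` every
vector is a sum of generalized eigenvectors, and on a generalized eigenvector for `μ` the
exponential acts as `e^{tμ}` times a polynomial in `t`, which tends to `0` because `Re μ < 0`.
-/

open NormedSpace Finset
open scoped Nat

lemma Complex.tendsto_pow_mul_exp_mul_atTop_nhds_zero {μ : ℂ} (hμ : μ.re < 0) (j : ℕ) :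
    Tendsto (fun t : ℝ => (t : ℂ) ^ j * Complex.exp (t * μ)) atTop (𝓝 0) := by
  rw [tendsto_zero_iff_norm_tendsto_zero]
  refine (tendsto_rpow_mul_exp_neg_mul_atTop_nhds_zero j (-μ.re) (neg_pos.2 hμ)).congr' ?_
  filter_upwards [eventually_ge_atTop 0] with t ht
  rw [norm_mul, norm_pow, Complex.norm_real, Real.norm_of_nonneg ht, Complex.norm_exp,
    Complex.re_ofReal_mul, Real.rpow_natCast, neg_neg, mul_comm μ.re]

namespace Matrix

variable {ι : Type*} [Fintype ι] [DecidableEq ι]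

section Exp

attribute [local instance] Matrix.linftyOpNormedRing Matrix.linftyOpNormedAlgebra

variable {𝕂 : Type*} [RCLike 𝕂]

lemma exp_mulVec_eq_sum {N : Matrix ι ι 𝕂} {w : ι → 𝕂} {k : ℕ} (h : N ^ k *ᵥ w = 0) :
    exp N *ᵥ w = ∑ j ∈ range k, (j ! : 𝕂)⁻¹ • (N ^ j *ᵥ w) := by
  have hsum : HasSum (fun j => (j ! : 𝕂)⁻¹ • (N ^ j *ᵥ w)) (exp N *ᵥ w) := by
    have h := (exp_series_hasSum_exp' (𝕂 := 𝕂) N).mapL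
      (LinearMap.toContinuousLinearMap ((mulVecBilin 𝕂 𝕂).flip w))
    simp only [LinearMap.coe_toContinuousLinearMap', LinearMap.flip_apply, mulVecBilin_apply,
      smul_mulVec] at h
    exact h
  refine hsum.unique (hasSum_sum_of_ne_finset_zero fun j hj => ?_)
  rw [← Nat.sub_add_cancel (not_lt.1 (mem_range.not.1 hj)), pow_add, ← mulVec_mulVec, h,
    mulVec_zero, smul_zero]

theorem eq_exp_smul_mulVec_of_hasDerivAt {M : Matrix ι ι 𝕂} {y : ℝ → ι → 𝕂}
    (hy : ∀ t, HasDerivAt y (M *ᵥ y t) t) (t : ℝ) : y t = exp (t • M) *ᵥ y 0 := by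
  have hsol : ∀ t, HasDerivAt (fun s : ℝ => exp (s • M) *ᵥ y 0)
      (M *ᵥ (exp (t • M) *ᵥ y 0)) t := fun t => by
    rw [mulVec_mulVec]
    exact (LinearMap.toContinuousLinearMap ((mulVecBilin ℝ 𝕂).flip (y 0))).hasFDerivAt
      |>.comp_hasDerivAt t (hasDerivAt_exp_smul_const' (𝕂 := ℝ) M t)
  have := ODE_solution_unique_univ (v := fun _ z => M *ᵥ z) (s := fun _ => Set.univ) (t₀ := 0)
    (fun _ => (LinearMap.toContinuousLinearMap (mulVecLin M)).lipschitz.lipschitzOnWith)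
    (fun t => ⟨hy t, trivial⟩) (fun t => ⟨hsol t, trivial⟩) (by simp)
  exact congrFun this t

lemma exp_smul_mulVec_eq_sum {M : Matrix ι ι ℂ} {μ : ℂ} {w : ι → ℂ} {k : ℕ}
    (h : (M - μ • 1) ^ k *ᵥ w = 0) (t : ℝ) :
    exp (t • M) *ᵥ w = ∑ j ∈ range k,
      ((t : ℂ) ^ j * Complex.exp (t * μ)) • ((j ! : ℂ)⁻¹ • ((M - μ • 1) ^ j *ᵥ w)) := by
  set N := M - μ • 1
  have hsplit : t • M = algebraMap ℂ _ (t * μ) + (t : ℂ) • N := by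
    rw [Algebra.algebraMap_eq_smul_one, smul_sub, ← mul_smul, Complex.coe_smul]
    abel
  have htN : ((t : ℂ) • N) ^ k *ᵥ w = 0 := by rw [smul_pow, smul_mulVec, h, smul_zero]
  have hscalar : exp (algebraMap ℂ (Matrix ι ι ℂ) (t * μ)) =
      algebraMap ℂ _ (Complex.exp (t * μ)) := by
    rw [Complex.exp_eq_exp_ℂ]; exact (algebraMap_exp_comm _).symm
  rw [hsplit, exp_add_of_commute _ _ (Algebra.commute_algebraMap_left _ _), hscalar,
    ← Algebra.smul_def, smul_mulVec, exp_mulVec_eq_sum htN, smul_sum]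
  refine sum_congr rfl fun j _ => ?_
  rw [smul_pow, smul_mulVec]
  module

end Exp

lemma eq_zero_of_pow_sub_smul_mulVec_eq_zero {K : Type*} [Field K] {M : Matrix ι ι K} {μ : K}
    (hμ : μ ∉ spectrum K M) {w : ι → K} {k : ℕ} (h : (M - μ • 1) ^ k *ᵥ w = 0) : w = 0 := by
  rw [spectrum.notMem_iff, Algebra.algebraMap_eq_smul_one, ← IsUnit.neg_iff, neg_sub] at hμ
  exact mulVec_injective_iff_isUnit.2 (hμ.pow k) (h.trans (mulVec_zero _).symm)

theorem tendsto_exp_smul_mulVec_atTop_nhds_zero {M : Matrix ι ι ℂ}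
    (hM : ∀ z ∈ spectrum ℂ M, z.re < 0) (w : ι → ℂ) :
    Tendsto (fun t : ℝ => exp (t • M) *ᵥ w) atTop (𝓝 0) := by
  have hw : w ∈ ⨆ μ, Module.End.maxGenEigenspace (toLinAlgEquiv' M) μ := by
    rw [Module.End.iSup_maxGenEigenspace_eq_top]; trivial
  refine Submodule.iSup_induction (motive := fun w => Tendsto (fun t : ℝ => exp (t • M) *ᵥ w)
    atTop (𝓝 0)) _ hw (fun μ w hw => ?_) (by simp)
    fun w₁ w₂ h₁ h₂ => by simpa [mulVec_add] using h₁.add h₂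
  obtain ⟨k, hk⟩ := (Module.End.mem_maxGenEigenspace _ _ _).1 hw
  replace hk : (M - μ • 1) ^ k *ᵥ w = 0 := by
    simpa [← toLinAlgEquiv'_apply] using hk
  by_cases hμ : μ ∈ spectrum ℂ M
  · have := tendsto_finsetSum (range k) fun j _ =>
      (Complex.tendsto_pow_mul_exp_mul_atTop_nhds_zero (hM μ hμ) j).smul_const
        ((j ! : ℂ)⁻¹ • ((M - μ • 1) ^ j *ᵥ w))
    simpa [exp_smul_mulVec_eq_sum hk] using this
  · simp [eq_zero_of_pow_sub_smul_mulVec_eq_zero hμ hk]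

end Matrix

theorem IsHurwitz.tendsto_atTop_nhds_zero {n : ℕ} {A : Matrix (Fin n) (Fin n) ℝ}
    (hA : IsHurwitz A) {y : ℝ → Fin n → ℝ} (hy : ∀ t, HasDerivAt y (A *ᵥ y t) t) :
    Tendsto y atTop (𝓝 0) := by
  let Φ : (Fin n → ℝ) →L[ℝ] (Fin n → ℂ) :=
    ContinuousLinearMap.pi fun i => Complex.ofRealCLM.comp (ContinuousLinearMap.proj i)
  let Ψ : (Fin n → ℂ) →L[ℝ] (Fin n → ℝ) :=
    ContinuousLinearMap.pi fun i => Complex.reCLM.comp (ContinuousLinearMap.proj i)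
  have hz : ∀ t, HasDerivAt (fun s => Φ (y s)) (A.map Complex.ofReal *ᵥ Φ (y t)) t := fun t =>
    (Φ.hasFDerivAt.comp_hasDerivAt t (hy t)).congr_deriv <| funext fun i =>
      RingHom.map_mulVec Complex.ofRealHom A (y t) i
  have := (Ψ.continuous.tendsto' 0 0 (map_zero Ψ)).comp
    (tendsto_exp_smul_mulVec_atTop_nhds_zero hA (Φ (y 0)))
  refine this.congr fun t => ?_
  rw [Function.comp_apply, ← eq_exp_smul_mulVec_of_hasDerivAt hz t]
  ext i; simp [Φ, Ψ]

theorem closedLoop_mulVec_eq {R : Type*} [CommRing R]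
    {ι κ μ ν : Type*} [Fintype ι] [Fintype κ] [Fintype μ]
    (A : Matrix ν ι R) (B : Matrix ν κ R) (E : Matrix ν μ R) (K₁ : Matrix κ ι R)
    (X : Matrix ι μ R) (U : Matrix κ μ R) (x : ι → R) (v : μ → R) :
    A *ᵥ x + B *ᵥ (K₁ *ᵥ x + (U - K₁ * X) *ᵥ v) + E *ᵥ v =
      (A + B * K₁) *ᵥ (x - X *ᵥ v) + (A * X + B * U + E) *ᵥ v := by
  simp only [add_mulVec, mulVec_add, mulVec_sub, sub_mulVec, ← mulVec_mulVec]
  abel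

/-- Full-information output regulation via the regulator equations:
with `u = K₁ x + K₂ v`, `K₂ = U - K₁ X`, the error coordinate
`x̄ = x - X v` satisfies `ẋ̄ = (A + B K₁) x̄`, `e = (C + D K₁) x̄`, and the
tracking error tends to zero. -/
theorem full_information_output_regulation
    {n m p q : ℕ}
    (A : Matrix (Fin n) (Fin n) ℝ) (B : Matrix (Fin n) (Fin m) ℝ)
    (E : Matrix (Fin n) (Fin q) ℝ) (C : Matrix (Fin p) (Fin n) ℝ)
    (D : Matrix (Fin p) (Fin m) ℝ) (F : Matrix (Fin p) (Fin q) ℝ)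
    (S : Matrix (Fin q) (Fin q) ℝ)
    (K₁ : Matrix (Fin m) (Fin n) ℝ)
    (hK₁ : IsHurwitz (A + B * K₁))
    (X : Matrix (Fin n) (Fin q) ℝ) (U : Matrix (Fin m) (Fin q) ℝ)
    (hreg1 : X * S = A * X + B * U + E)
    (hreg2 : (0 : Matrix (Fin p) (Fin q) ℝ) = C * X + D * U + F)
    (K₂ : Matrix (Fin m) (Fin q) ℝ) (hK₂ : K₂ = U - K₁ * X)
    (x : ℝ → Fin n → ℝ) (v : ℝ → Fin q → ℝ)
    (u : ℝ → Fin m → ℝ) (e : ℝ → Fin p → ℝ)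
    (hu : ∀ t, u t = K₁.mulVec (x t) + K₂.mulVec (v t))
    (hx : ∀ t, HasDerivAt x (A.mulVec (x t) + B.mulVec (u t) + E.mulVec (v t)) t)
    (hv : ∀ t, HasDerivAt v (S.mulVec (v t)) t)
    (he : ∀ t, e t = C.mulVec (x t) + D.mulVec (u t) + F.mulVec (v t)) :
    (∀ t, HasDerivAt (fun s => x s - X.mulVec (v s))
        ((A + B * K₁).mulVec (x t - X.mulVec (v t))) t) ∧
    (∀ t, e t = (C + D * K₁).mulVec (x t - X.mulVec (v t))) ∧
    Tendsto e atTop (𝓝 0) := by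
  subst hK₂
  have hxbar : ∀ t, HasDerivAt (fun s => x s - X *ᵥ v s)
      ((A + B * K₁) *ᵥ (x t - X *ᵥ v t)) t := fun t => by
    have hXv := (LinearMap.toContinuousLinearMap (mulVecLin X)).hasFDerivAt
      |>.comp_hasDerivAt t (hv t)
    refine ((hx t).sub hXv).congr_deriv ?_
    rw [hu, closedLoop_mulVec_eq, ← hreg1, ← mulVec_mulVec]
    exact add_sub_cancel_right _ _
  have he' : ∀ t, e t = (C + D * K₁) *ᵥ (x t - X *ᵥ v t) := fun t => by
    rw [he, hu, closedLoop_mulVec_eq, ← hreg2, zero_mulVec, add_zero]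
  refine ⟨hxbar, he', ?_⟩
  have hcont : Continuous fun z : Fin n → ℝ => (C + D * K₁) *ᵥ z :=
    LinearMap.continuous_of_finiteDimensional (mulVecLin (C + D * K₁))
  exact ((hcont.tendsto' 0 0 (mulVec_zero _)).comp (hK₁.tendsto_atTop_nhds_zero hxbar)).congr
    fun t => (he' t).symm
end

section
/- For any complex numbers λ ∈ σ(S), the regulator equations X S = A X + B U + E, 0 = C X + D U + F are solvable for every pair (E, F) if and only if rank [[A − λI, B],[C, D]] = n + p for all λ ∈ σ(S). -/
/-!
With `Y = [X; U]`, `J = [[1, 0], [0, 0]]` and `G = [[A, B], [C, D]]`, the regulator equations say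
that `J Y S - G Y` takes the value `[E; F]`, so the question is when this Sylvester-type map is
onto. If `S u = λ u` and `v` is a left null vector of `G - λ J`, then `v Z u = 0` for every `Z` in
its range; taking `Z` a matrix unit shows that surjectivity forces full row rank. Conversely, a
functional vanishing on the range is `Z ↦ tr (W Z)` with `W ≠ 0` and `S W J = W G`; along a Jordan
chain of `y ↦ y S` there is a row vector `y` with `y W ≠ 0` and `(y S) W = μ (y W)`, and then `y W` is a
left null vector of `G - μ J`. Real and complex solvability agree by taking real and imaginary
parts.
-/

open Matrix

/-- Take the last nonzero image under `R` along a Jordan chain of a generalized eigenvector of `f`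
that `R` does not kill. -/
theorem Module.End.exists_hasEigenvalue_map_ne_zero_map_apply_eq_smul {K V W : Type*} [Field K]
    [IsAlgClosed K] [AddCommGroup V] [Module K V] [FiniteDimensional K V] [AddCommGroup W]
    [Module K W] (f : Module.End K V) (R : V →ₗ[K] W) (hR : R ≠ 0) :
    ∃ μ x, f.HasEigenvalue μ ∧ R x ≠ 0 ∧ R (f x) = μ • R x := by
  obtain ⟨μ, w, hw, hRw⟩ : ∃ μ, ∃ w ∈ f.maxGenEigenspace μ, R w ≠ 0 := by
    by_contra! h
    refine hR (LinearMap.ker_eq_top.mp (top_le_iff.mp ?_))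
    rw [← f.iSup_maxGenEigenspace_eq_top]
    exact iSup_le fun μ w hw => h μ w hw
  obtain ⟨k, hk⟩ := (f.mem_maxGenEigenspace μ w).mp hw
  set g := f - μ • 1
  have hvanish : ∃ j, R ((g ^ (j + 1)) w) = 0 :=
    ⟨k, by rw [pow_succ', Module.End.mul_apply, hk, map_zero, map_zero]⟩
  classical
  set j := Nat.find hvanish
  have hj : R ((g ^ j) w) ≠ 0 := by
    rcases hj0 : j with _ | i
    · simpa using hRw
    · exact Nat.find_min hvanish (show i < j by omega)
  refine ⟨μ, (g ^ j) w, ?_, hj, ?_⟩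
  · refine Module.End.hasEigenvalue_of_hasGenEigenvalue (k := k) ?_
    rw [Module.End.hasGenEigenvalue_iff, Submodule.ne_bot_iff]
    exact ⟨w, Module.End.mem_genEigenspace_nat.mpr hk, fun h => hRw (by simp [h])⟩
  · have hnext := Nat.find_spec hvanish
    rw [pow_succ', Module.End.mul_apply] at hnext
    simpa [g, sub_eq_zero] using hnext

namespace Matrix

section Field

variable {K : Type*} [Field K] {l m n : Type*} [Fintype l] [Fintype m]

theorem rank_eq_card_iff_vecMul_eq_zero [Fintype n] (M : Matrix m n K) :
    M.rank = Fintype.card m ↔ ∀ v, v ᵥ* M = 0 → v = 0 := by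
  rw [rank_eq_finrank_span_row, eq_comm]
  change Fintype.card m = (Set.range M.row).finrank K ↔ _
  rw [← linearIndependent_iff_card_eq_finrank_span, ← vecMul_injective_iff, ← coe_vecMulLinear,
    injective_iff_map_eq_zero]
  rfl

theorem spectrum_transpose [DecidableEq l] (S : Matrix l l K) : spectrum K Sᵀ = spectrum K S := by
  ext μ
  rw [mem_spectrum_iff_isRoot_charpoly, mem_spectrum_iff_isRoot_charpoly, charpoly_transpose]

theorem exists_trace_mul_eq (φ : Module.Dual K (Matrix m l K)) :
    ∃ W : Matrix l m K, ∀ Z, φ Z = (W * Z).trace := by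
  classical
  refine ⟨of fun j i => φ (single i j 1), fun Z => ?_⟩
  conv_lhs => rw [matrix_eq_sum_single Z]
  simp only [map_sum, trace, diag, mul_apply, of_apply]
  rw [Finset.sum_comm]
  refine Finset.sum_congr rfl fun i _ => Finset.sum_congr rfl fun j _ => ?_
  rw [mul_comm, ← smul_eq_mul, ← map_smul, smul_single, smul_eq_mul, mul_one]

end Field

section CommRing

variable {R : Type*} [CommRing R] {l m n : Type*} [Fintype l] [Fintype n]

def sylvesterMap (J G : Matrix m n R) (S : Matrix l l R) : Matrix n l R →ₗ[R] Matrix m l R where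
  toFun Y := J * Y * S - G * Y
  map_add' Y Z := by simp only [Matrix.mul_add, Matrix.add_mul]; abel
  map_smul' c Y := by simp only [Matrix.mul_smul, Matrix.smul_mul, smul_sub, RingHom.id_apply]

@[simp]
theorem sylvesterMap_apply (J G : Matrix m n R) (S : Matrix l l R) (Y : Matrix n l R) :
    sylvesterMap J G S Y = J * Y * S - G * Y := rfl

theorem sylvesterMap_map {R' : Type*} [CommRing R'] (f : R →+* R') (J G : Matrix m n R)
    (S : Matrix l l R) (Y : Matrix n l R) :
    sylvesterMap (J.map f) (G.map f) (S.map f) (Y.map f) = (sylvesterMap J G S Y).map f := by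
  rw [sylvesterMap_apply, sylvesterMap_apply, Matrix.map_sub _ (map_sub f), Matrix.map_mul,
    Matrix.map_mul, Matrix.map_mul]

theorem sylvesterMap_mulVec_of_mulVec_eq_smul {J G : Matrix m n R} {S : Matrix l l R} {μ : R}
    {u : l → R} (hu : S *ᵥ u = μ • u) (Y : Matrix n l R) :
    sylvesterMap J G S Y *ᵥ u = -((G - μ • J) *ᵥ (Y *ᵥ u)) := by
  rw [sylvesterMap_apply, sub_mulVec, ← mulVec_mulVec, hu, mulVec_smul, ← mulVec_mulVec,
    ← mulVec_mulVec, sub_mulVec, smul_mulVec, neg_sub]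

end CommRing

section Field

variable {K : Type*} [Field K] {l m n : Type*} [Fintype l] [Fintype m] [Fintype n]
  {J G : Matrix m n K} {S : Matrix l l K}

theorem rank_eq_card_of_sylvesterMap_surjective [DecidableEq l]
    (h : Function.Surjective (sylvesterMap J G S)) {μ : K} (hμ : μ ∈ spectrum K S) :
    (G - μ • J).rank = Fintype.card m := by
  classical
  rw [← spectrum_toLin', ← Module.End.hasEigenvalue_iff_mem_spectrum] at hμ
  obtain ⟨u, hu⟩ := hμ.exists_hasEigenvector
  have hSu : S *ᵥ u = μ • u := by simpa using hu.apply_eq_smul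
  obtain ⟨j, hj⟩ := Function.ne_iff.mp hu.2
  rw [rank_eq_card_iff_vecMul_eq_zero]
  intro v hv
  have hvZ : ∀ Z, v ⬝ᵥ (Z *ᵥ u) = 0 := fun Z => by
    obtain ⟨Y, rfl⟩ := h Z
    rw [sylvesterMap_mulVec_of_mulVec_eq_smul hSu, dotProduct_neg, dotProduct_mulVec, hv,
      zero_dotProduct, neg_zero]
  ext i
  have hvi : v ⬝ᵥ Pi.single i (u j) = 0 := by
    have hvZij := hvZ (single i j 1)
    rwa [single_mulVec, one_mul] at hvZij
  rw [dotProduct_single] at hvi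
  exact (mul_eq_zero.mp hvi).resolve_right hj

theorem exists_ne_zero_mul_eq_of_not_surjective (h : ¬ Function.Surjective (sylvesterMap J G S)) :
    ∃ W : Matrix l m K, W ≠ 0 ∧ S * W * J = W * G := by
  obtain ⟨φ, hφL, hφ⟩ : ∃ φ, (sylvesterMap J G S).dualMap φ = 0 ∧ φ ≠ 0 := by
    rw [← LinearMap.dualMap_injective_iff, injective_iff_map_eq_zero] at h
    push Not at h
    exact h
  obtain ⟨W, hW⟩ := exists_trace_mul_eq φ
  refine ⟨W, fun hW0 => hφ (LinearMap.ext fun Z => by simp [hW, hW0]), ?_⟩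
  rw [ext_iff_trace_mul_right]
  intro Y
  have hφY := LinearMap.congr_fun hφL Y
  rw [LinearMap.dualMap_apply, sylvesterMap_apply, hW, LinearMap.zero_apply, Matrix.mul_sub,
    trace_sub, sub_eq_zero] at hφY
  rw [Matrix.mul_assoc W G, ← hφY, Matrix.mul_assoc, Matrix.mul_assoc, trace_mul_comm S,
    Matrix.mul_assoc]

theorem sylvesterMap_surjective_of_rank_eq_card [IsAlgClosed K] [DecidableEq l]
    (h : ∀ μ ∈ spectrum K S, (G - μ • J).rank = Fintype.card m) :
    Function.Surjective (sylvesterMap J G S) := by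
  by_contra hL
  obtain ⟨W, hW0, hSWJ⟩ := exists_ne_zero_mul_eq_of_not_surjective hL
  have hW : W.vecMulLinear ≠ 0 := fun h0 =>
    hW0 (vecMul_injective (funext fun y => by simpa using LinearMap.congr_fun h0 y))
  obtain ⟨μ, y, hμ, hy, hyS⟩ :=
    Module.End.exists_hasEigenvalue_map_ne_zero_map_apply_eq_smul S.vecMulLinear W.vecMulLinear hW
  simp only [vecMulLinear_apply] at hy hyS
  have hμS : μ ∈ spectrum K S := by
    rwa [← spectrum_transpose, ← spectrum_toLin', ← Module.End.hasEigenvalue_iff_mem_spectrum,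
      toLin'_apply', mulVecLin_transpose]
  refine hy ((rank_eq_card_iff_vecMul_eq_zero _).mp (h μ hμS) _ ?_)
  rw [vecMul_sub, vecMul_smul, vecMul_vecMul, ← hSWJ, ← vecMul_vecMul, ← vecMul_vecMul, hyS,
    smul_vecMul, sub_self]

theorem sylvesterMap_surjective_iff [IsAlgClosed K] [DecidableEq l] :
    Function.Surjective (sylvesterMap J G S) ↔
      ∀ μ ∈ spectrum K S, (G - μ • J).rank = Fintype.card m :=
  ⟨fun h _ => rank_eq_card_of_sylvesterMap_surjective h, sylvesterMap_surjective_of_rank_eq_card⟩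

end Field

section Real

variable {l m n : Type*} [Fintype l] [Fintype n]

theorem map_re_ofReal_mul {o : Type*} (M : Matrix m n ℝ) (N : Matrix n o ℂ) :
    (M.map Complex.ofReal * N).map Complex.re = M * N.map Complex.re := by
  ext i j
  simp [mul_apply, Complex.re_sum]

theorem map_re_mul_ofReal {o : Type*} (N : Matrix m n ℂ) (M : Matrix n o ℝ) :
    (N * M.map Complex.ofReal).map Complex.re = N.map Complex.re * M := by
  ext i j
  simp [mul_apply, Complex.re_sum]

theorem map_re_sylvesterMap (J G : Matrix m n ℝ) (S : Matrix l l ℝ) (Y : Matrix n l ℂ) :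
    (sylvesterMap (J.map Complex.ofReal) (G.map Complex.ofReal) (S.map Complex.ofReal) Y).map
        Complex.re = sylvesterMap J G S (Y.map Complex.re) := by
  rw [sylvesterMap_apply, sylvesterMap_apply, Matrix.map_sub _ Complex.sub_re, map_re_mul_ofReal,
    map_re_ofReal_mul, map_re_ofReal_mul]

theorem sylvesterMap_map_ofReal_surjective_iff (J G : Matrix m n ℝ) (S : Matrix l l ℝ) :
    Function.Surjective
        (sylvesterMap (J.map Complex.ofReal) (G.map Complex.ofReal) (S.map Complex.ofReal)) ↔
      Function.Surjective (sylvesterMap J G S) := by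
  constructor
  · intro h Z
    obtain ⟨Y, hY⟩ := h (Z.map Complex.ofReal)
    refine ⟨Y.map Complex.re, ?_⟩
    rw [← map_re_sylvesterMap, hY]
    ext i j
    simp
  · intro h Z
    obtain ⟨Y₁, h₁⟩ := h (Z.map Complex.re)
    obtain ⟨Y₂, h₂⟩ := h (Z.map Complex.im)
    refine ⟨Y₁.map Complex.ofReal + Complex.I • Y₂.map Complex.ofReal, ?_⟩
    have hmap : ∀ Y : Matrix n l ℝ, sylvesterMap (J.map Complex.ofReal) (G.map Complex.ofReal)
        (S.map Complex.ofReal) (Y.map Complex.ofReal) = (sylvesterMap J G S Y).map Complex.ofReal :=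
      sylvesterMap_map Complex.ofRealHom J G S
    rw [map_add, map_smul, hmap, hmap, h₁, h₂]
    ext i j
    simp [Complex.ext_iff]

end Real

end Matrix

section Regulator

variable {R : Type*} [CommRing R] {n m p q : Type*} [Fintype n] [Fintype m] [Fintype q]
  [DecidableEq n]

theorem Matrix.sylvesterMap_fromBlocks_fromRows (A : Matrix n n R) (B : Matrix n m R)
    (C : Matrix p n R) (D : Matrix p m R) (S : Matrix q q R) (X : Matrix n q R)
    (U : Matrix m q R) :
    sylvesterMap (fromBlocks 1 0 0 0) (fromBlocks A B C D) S (fromRows X U)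
      = fromRows (X * S - (A * X + B * U)) (-(C * X + D * U)) := by
  ext (i | i) j <;> simp [fromBlocks_mul_fromRows, fromRows_mul]

theorem regulator_solvable_iff_sylvesterMap_surjective
    (A : Matrix n n R) (B : Matrix n m R) (C : Matrix p n R) (D : Matrix p m R)
    (S : Matrix q q R) :
    (∀ (E : Matrix n q R) (F : Matrix p q R), ∃ (X : Matrix n q R) (U : Matrix m q R),
        X * S = A * X + B * U + E ∧ (0 : Matrix p q R) = C * X + D * U + F) ↔
      Function.Surjective (sylvesterMap (fromBlocks 1 0 0 0) (fromBlocks A B C D) S) := by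
  constructor
  · intro h Z
    obtain ⟨X, U, h₁, h₂⟩ := h Z.toRows₁ Z.toRows₂
    refine ⟨fromRows X U, ?_⟩
    rw [sylvesterMap_fromBlocks_fromRows, ← fromRows_toRows Z, h₁,
      neg_eq_of_add_eq_zero_right h₂.symm]
    congr 1
    abel
  · intro h E F
    obtain ⟨Y, hY⟩ := h (fromRows E F)
    rw [← fromRows_toRows Y, sylvesterMap_fromBlocks_fromRows] at hY
    obtain ⟨h₁, h₂⟩ := fromRows_inj hY
    exact ⟨_, _, by rw [← h₁]; abel, by rw [← h₂]; abel⟩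

end Regulator

/-- The regulator equations are solvable for every pair `(E, F)` iff the
transmission-zero rank condition holds at every eigenvalue of `S`. -/
theorem regulator_equations_solvable_iff_rank {n m p q : ℕ}
    (A : Matrix (Fin n) (Fin n) ℝ) (B : Matrix (Fin n) (Fin m) ℝ)
    (C : Matrix (Fin p) (Fin n) ℝ) (D : Matrix (Fin p) (Fin m) ℝ)
    (S : Matrix (Fin q) (Fin q) ℝ) :
    (∀ (E : Matrix (Fin n) (Fin q) ℝ) (F : Matrix (Fin p) (Fin q) ℝ),
      ∃ (X : Matrix (Fin n) (Fin q) ℝ) (U : Matrix (Fin m) (Fin q) ℝ),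
        X * S = A * X + B * U + E ∧ (0 : Matrix (Fin p) (Fin q) ℝ) = C * X + D * U + F) ↔
    (∀ lam ∈ spectrum ℂ (S.map Complex.ofReal),
      (Matrix.fromBlocks (A.map Complex.ofReal - lam • (1 : Matrix (Fin n) (Fin n) ℂ))
          (B.map Complex.ofReal) (C.map Complex.ofReal) (D.map Complex.ofReal)).rank
        = n + p) := by
  rw [regulator_solvable_iff_sylvesterMap_surjective, ← sylvesterMap_map_ofReal_surjective_iff,
    sylvesterMap_surjective_iff]
  refine forall₂_congr fun μ _ => ?_
  have hpencil : (fromBlocks A B C D).map Complex.ofReal -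
      μ • (fromBlocks (1 : Matrix (Fin n) (Fin n) ℝ) 0 0 0).map Complex.ofReal =
      fromBlocks (A.map Complex.ofReal - μ • 1) (B.map Complex.ofReal) (C.map Complex.ofReal)
        (D.map Complex.ofReal) := by
    ext (i | i) (j | j)
    · by_cases hij : i = j <;> simp [one_apply, hij]
    all_goals simp
  rw [hpencil, Fintype.card_sum, Fintype.card_fin, Fintype.card_fin]
end

section
/- Let (A, B) be a controllable pair with A ∈ ℝ^{n×n}, B ∈ ℝ^{n×m}, and let P be the unique positive definite solution of the algebraic Riccati equation Aᵀ P + P A − P B Bᵀ P + I_n = 0. If λ ∈ ℂ has Re λ ≥ 1, then A − λ B Bᵀ P is Hurwitz. -/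
/-!
The weighting matrix `P` itself is a Lyapunov function for `M = A - λ B Bᵀ P`: the Riccati
equation turns `Mᴴ P + P M` into `-(I + (2 Re λ - 1) P B Bᵀ P)`, which is negative definite
once `Re λ ≥ 1`. For an eigenvector `M v = z v` the quadratic form of `Mᴴ P + P M` at `v` is
`2 Re z · vᴴ P v`, so `Re z < 0`. Since the eigenvectors are complex, the argument is run over `ℂ`;
positivity of `P` survives complexification because `vᴴ P v = xᵀ P x + yᵀ P y` for `v = x + i y`.
-/

open Matrix

def IsHurwitzC {n : ℕ} (M : Matrix (Fin n) (Fin n) ℂ) : Prop :=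
  ∀ z ∈ spectrum ℂ M, z.re < 0

/-- Controllability: the controllability matrix `[B, AB, …, A^{n−1}B]` has rank `n`. -/
def Controllable {n m : ℕ} (A : Matrix (Fin n) (Fin n) ℝ) (B : Matrix (Fin n) (Fin m) ℝ) :
    Prop :=
  (Matrix.of fun (i : Fin n) (jk : Fin n × Fin m) =>
    (A ^ (jk.1 : ℕ) * B) i jk.2).rank = n

open scoped ComplexOrder

namespace Matrix

variable {l m n : Type*}

lemma exists_mulVec_eq_smul_of_mem_spectrum [Fintype n] [DecidableEq n] {K : Type*} [Field K]
    {M : Matrix n n K} {z : K} (hz : z ∈ spectrum K M) : ∃ v ≠ 0, M *ᵥ v = z • v := by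
  rw [← spectrum_toLin', ← Module.End.hasEigenvalue_iff_mem_spectrum] at hz
  obtain ⟨v, hv⟩ := hz.exists_hasEigenvector
  exact ⟨v, hv.2, by simpa using hv.apply_eq_smul⟩

lemma conjTranspose_map_ofReal (X : Matrix m n ℝ) :
    (X.map Complex.ofReal)ᴴ = Xᵀ.map Complex.ofReal := by
  rw [← conjTranspose_eq_transpose_of_trivial,
    conjTranspose_map _ fun x ↦ (Complex.conj_ofReal x).symm]

lemma map_ofReal_mul [Fintype m] (X : Matrix l m ℝ) (Y : Matrix m n ℝ) :
    (X * Y).map Complex.ofReal = X.map Complex.ofReal * Y.map Complex.ofReal :=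
  Matrix.map_mul (f := Complex.ofRealHom)

lemma re_star_dotProduct_map_ofReal_mulVec [Fintype n] (P : Matrix n n ℝ) (v : n → ℂ) :
    (star v ⬝ᵥ P.map Complex.ofReal *ᵥ v).re =
      (fun i ↦ (v i).re) ⬝ᵥ P *ᵥ (fun i ↦ (v i).re) +
        (fun i ↦ (v i).im) ⬝ᵥ P *ᵥ (fun i ↦ (v i).im) := by
  simp only [dotProduct, mulVec, map_apply, Pi.star_apply, Complex.star_def, Finset.mul_sum,
    Complex.re_sum, ← Finset.sum_add_distrib]
  refine Finset.sum_congr rfl fun i _ ↦ Finset.sum_congr rfl fun j _ ↦ ?_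
  simp only [Complex.mul_re, Complex.mul_im, Complex.conj_re, Complex.conj_im,
    Complex.ofReal_re, Complex.ofReal_im]
  ring

lemma PosDef.map_ofReal [Fintype n] {P : Matrix n n ℝ} (hP : P.PosDef) :
    (P.map Complex.ofReal).PosDef := by
  have hherm : (P.map Complex.ofReal).IsHermitian :=
    hP.isHermitian.map _ fun x ↦ (Complex.conj_ofReal x).symm
  refine .of_dotProduct_mulVec_pos hherm fun v hv ↦ RCLike.pos_iff.mpr ⟨?_, ?_⟩
  · have hre_or_im : (fun i ↦ (v i).re) ≠ 0 ∨ (fun i ↦ (v i).im) ≠ 0 := by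
      by_contra! h
      exact hv (funext fun i ↦ Complex.ext (congrFun h.1 i) (congrFun h.2 i))
    change 0 < (star v ⬝ᵥ P.map Complex.ofReal *ᵥ v).re
    rw [re_star_dotProduct_map_ofReal_mulVec]
    have hnonneg := hP.posSemidef.dotProduct_mulVec_nonneg
    simp only [star_trivial] at hnonneg
    rcases hre_or_im with hre | him
    · exact add_pos_of_pos_of_nonneg (by simpa using hP.dotProduct_mulVec_pos hre) (hnonneg _)
    · exact add_pos_of_nonneg_of_pos (hnonneg _) (by simpa using hP.dotProduct_mulVec_pos him)
  · exact hherm.im_star_dotProduct_mulVec_self v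

end Matrix

theorem isHurwitzC_of_lyapunov {n : ℕ} {M Q : Matrix (Fin n) (Fin n) ℂ} (hQ : Q.PosDef)
    (hL : (-(Mᴴ * Q + Q * M)).PosDef) : IsHurwitzC M := by
  intro z hz
  obtain ⟨v, hv, hMv⟩ := exists_mulVec_eq_smul_of_mem_spectrum hz
  have hquad : star v ⬝ᵥ (-(Mᴴ * Q + Q * M)) *ᵥ v =
      ↑(-(2 * z.re)) * (star v ⬝ᵥ Q *ᵥ v) := by
    rw [neg_mulVec, add_mulVec, ← mulVec_mulVec, ← mulVec_mulVec, dotProduct_neg, dotProduct_add,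
      dotProduct_mulVec (star v) Mᴴ, ← star_mulVec, hMv, mulVec_smul, star_smul, smul_dotProduct,
      dotProduct_smul, smul_eq_mul, smul_eq_mul, ← add_mul, Complex.star_def, add_comm,
      Complex.add_conj, Complex.ofReal_neg, neg_mul]
  have hpos := hL.dotProduct_mulVec_pos hv
  rw [hquad] at hpos
  have hneg := Complex.zero_lt_real.mp (pos_of_mul_pos_left hpos (hQ.dotProduct_mulVec_pos hv).le)
  linarith

lemma riccati_closedLoop_lyapunov_eq {n m : Type*} [Fintype n] [Fintype m] [DecidableEq n]
    {A P : Matrix n n ℂ} {B : Matrix n m ℂ} (hP : Pᴴ = P)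
    (hric : Aᴴ * P + P * A - P * B * Bᴴ * P + 1 = 0) (lam : ℂ) :
    -((A - lam • (B * Bᴴ * P))ᴴ * P + P * (A - lam • (B * Bᴴ * P))) =
      1 + (star lam + lam - 1) • ((Bᴴ * P)ᴴ * (Bᴴ * P)) := by
  have hgram : (Bᴴ * P)ᴴ * (Bᴴ * P) = P * B * Bᴴ * P := by
    simp only [conjTranspose_mul, conjTranspose_conjTranspose, hP, Matrix.mul_assoc]
  have hone : (1 : Matrix n n ℂ) = P * B * Bᴴ * P - Aᴴ * P - P * A := by
    rw [← sub_eq_zero, ← hric]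
    abel
  rw [hgram, hone, conjTranspose_sub, conjTranspose_smul, conjTranspose_mul, conjTranspose_mul,
    conjTranspose_conjTranspose, hP]
  simp only [sub_mul, mul_sub, Matrix.smul_mul, Matrix.mul_smul, sub_smul, add_smul, one_smul,
    Matrix.mul_assoc]
  abel

theorem isHurwitzC_sub_smul_riccatiGain {n m : ℕ} {A P : Matrix (Fin n) (Fin n) ℂ}
    {B : Matrix (Fin n) (Fin m) ℂ} (hP : P.PosDef)
    (hric : Aᴴ * P + P * A - P * B * Bᴴ * P + 1 = 0) {lam : ℂ} (hlam : 1 ≤ lam.re) :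
    IsHurwitzC (A - lam • (B * Bᴴ * P)) := by
  refine isHurwitzC_of_lyapunov hP ?_
  rw [riccati_closedLoop_lyapunov_eq hP.isHermitian hric]
  have hcoeff : (0 : ℂ) ≤ star lam + lam - 1 := by
    rw [Complex.star_def, add_comm, Complex.add_conj, ← Complex.ofReal_one, ← Complex.ofReal_sub,
      Complex.zero_le_real]
    linarith
  exact PosDef.one.add_posSemidef ((posSemidef_conjTranspose_mul_self _).smul hcoeff)

theorem riccati_gain_stabilizes_general {n m : ℕ}
    (A : Matrix (Fin n) (Fin n) ℝ) (B : Matrix (Fin n) (Fin m) ℝ)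
    (P : Matrix (Fin n) (Fin n) ℝ) (hP : P.PosDef)
    (hric : Aᵀ * P + P * A - P * B * Bᵀ * P + 1 = 0)
    (lam : ℂ) (hlam : 1 ≤ lam.re) :
    IsHurwitzC (A.map Complex.ofReal - lam • ((B * Bᵀ * P).map Complex.ofReal)) := by
  have hricC := congrArg (Matrix.map · Complex.ofReal) hric
  simp only [Matrix.map_add _ Complex.ofReal_add, Matrix.map_sub _ Complex.ofReal_sub,
    Matrix.map_one _ Complex.ofReal_zero Complex.ofReal_one, Matrix.map_zero _ Complex.ofReal_zero,
    map_ofReal_mul, ← conjTranspose_map_ofReal] at hricC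
  rw [map_ofReal_mul, map_ofReal_mul, ← conjTranspose_map_ofReal]
  exact isHurwitzC_sub_smul_riccatiGain hP.map_ofReal hricC hlam

/-- Riccati-based robust stabilization: if `P` is the positive definite solution of
`Aᵀ P + P A − P B Bᵀ P + I = 0` and `Re λ ≥ 1`, then `A − λ B Bᵀ P` is Hurwitz. -/
theorem riccati_gain_stabilizes {n m : ℕ}
    (A : Matrix (Fin n) (Fin n) ℝ) (B : Matrix (Fin n) (Fin m) ℝ)
    (hctrb : Controllable A B)
    (P : Matrix (Fin n) (Fin n) ℝ) (hP : P.PosDef) (hPsymm : P.IsSymm)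
    (hric : Aᵀ * P + P * A - P * B * Bᵀ * P + 1 = 0)
    (lam : ℂ) (hlam : 1 ≤ lam.re) :
    IsHurwitzC (A.map Complex.ofReal - lam • ((B * Bᵀ * P).map Complex.ofReal)) :=
  riccati_gain_stabilizes_general A B P hP hric lam hlam
end

section
/- Suppose a matrix X_c satisfies X_c S = A_c X_c + B_c and 0 = C_c X_c + D_c, with A_c Hurwitz. Consider the perturbed closed-loop system ẋ_c = A_c x_c + B_c v + Bδ(t), v̇ = S v, e = C_c x_c + D_c v + D δ_u(t), where δ and δ_u are piecewise continuous functions converging to 0 as t → ∞. Then e(t) → 0 as t → ∞ for all initial conditions. -/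
/-
In the coordinates `x̄ = x_c - X_c v` the regulator equations cancel the exosystem:
`x̄' = A_c x̄ + B δ` and `e = C_c x̄ + D δ_u`, so it suffices that a Hurwitz system driven by a
vanishing input decays. Over `ℂ`, Cayley–Hamilton writes `∏ (A - μ) = 0` over the eigenvalues
`μ`, and `z = (A - μ) x` solves the same kind of equation annihilated by one factor fewer, so
`z → 0` by induction; then `x' = μ x + (z + u)` is a scalar equation with `Re μ < 0`, whose
solutions decay by `‖x t‖ ≤ exp (Re μ (t - T)) ‖x T‖ + sup_{s ≥ T} ‖u s‖ / |Re μ|`.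
-/

open Matrix Filter Topology

open Polynomial

lemma norm_le_exp_mul_add_of_hasDerivAt_smul_add {E : Type*} [NormedAddCommGroup E]
    [NormedSpace ℂ E] {a : ℂ} (ha : a.re < 0) {x u : ℝ → E}
    (hx : ∀ t, HasDerivAt x (a • x t + u t) t) {T ε : ℝ} (hu : ∀ s ≥ T, ‖u s‖ ≤ ε)
    {t : ℝ} (hTt : T ≤ t) :
    ‖x t‖ ≤ Real.exp (a.re * (t - T)) * ‖x T‖ + ε / -a.re := by
  set b := -a.re with hb
  have hb0 : 0 < b := neg_pos.2 ha
  have hε : 0 ≤ ε := (norm_nonneg _).trans (hu T le_rfl)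
  have hnorm : ∀ s : ℝ, ‖Complex.exp (-((s - T : ℝ) : ℂ) * a)‖ = Real.exp (b * (s - T)) := by
    intro s
    rw [Complex.norm_exp]
    congr 1
    simp [hb]; ring
  -- Variation of constants: dividing out `exp ((s - T) a)` leaves `g' = exp (-(s - T) a) • u`.
  set g : ℝ → E := fun s => Complex.exp (-((s - T : ℝ) : ℂ) * a) • x s with hg
  have hg' : ∀ s, HasDerivAt g (Complex.exp (-((s - T : ℝ) : ℂ) * a) • u s) s := by
    intro s
    have hlin : HasDerivAt (fun s : ℝ => -((s - T : ℝ) : ℂ) * a) (-a) s := by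
      simpa using (((hasDerivAt_id s).sub_const T).ofReal_comp.neg.mul_const a)
    refine (hlin.cexp.smul (hx s)).congr_deriv ?_
    rw [smul_add, smul_smul, mul_neg, neg_smul]
    abel
  set B : ℝ → ℝ := fun s => ‖x T‖ + ε / b * (Real.exp (b * (s - T)) - 1) with hB
  have hB' : ∀ s, HasDerivAt B (ε * Real.exp (b * (s - T))) s := by
    intro s
    refine (((((hasDerivAt_id s).sub_const T).const_mul b).exp.sub_const 1).const_mul (ε / b)
      |>.const_add ‖x T‖).congr_deriv ?_
    field_simp
    rfl
  have hgB : ‖g t‖ ≤ B t := by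
    refine image_norm_le_of_norm_deriv_right_le_deriv_boundary
      (fun s _ => (hg' s).continuousAt.continuousWithinAt) (fun s _ => (hg' s).hasDerivWithinAt)
      (by simp [hg, hB]) hB' (fun s hs => ?_) ⟨hTt, le_rfl⟩
    rw [norm_smul, hnorm, mul_comm]
    exact mul_le_mul_of_nonneg_right (hu s hs.1) (Real.exp_nonneg _)
  have hxg : x t = Complex.exp (((t - T : ℝ) : ℂ) * a) • g t := by
    rw [hg, smul_smul, ← Complex.exp_add, neg_mul, add_neg_cancel, Complex.exp_zero, one_smul]
  have hexp : Real.exp (a.re * (t - T)) * Real.exp (b * (t - T)) = 1 := by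
    rw [← Real.exp_add, hb, ← add_mul, add_neg_cancel, zero_mul, Real.exp_zero]
  calc ‖x t‖ = Real.exp (a.re * (t - T)) * ‖g t‖ := by
        rw [hxg, norm_smul, Complex.norm_exp]; congr 2; simp [mul_comm]
    _ ≤ Real.exp (a.re * (t - T)) * B t := by gcongr
    _ = Real.exp (a.re * (t - T)) * ‖x T‖ + ε / b * (1 - Real.exp (a.re * (t - T))) := by
        linear_combination (ε / b) * hexp
    _ ≤ Real.exp (a.re * (t - T)) * ‖x T‖ + ε / b := by
        gcongr
        exact mul_le_of_le_one_right (div_nonneg hε hb0.le)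
          (sub_le_self _ (Real.exp_pos _).le)

lemma tendsto_zero_of_hasDerivAt_smul_add {E : Type*} [NormedAddCommGroup E]
    [NormedSpace ℂ E] {a : ℂ} (ha : a.re < 0) {x u : ℝ → E}
    (hx : ∀ t, HasDerivAt x (a • x t + u t) t) (hu : Tendsto u atTop (𝓝 0)) :
    Tendsto x atTop (𝓝 0) := by
  rw [NormedAddGroup.tendsto_nhds_zero] at hu ⊢
  intro ε hε
  obtain ⟨T, hT⟩ := eventually_atTop.1 (hu (-a.re * (ε / 2)) (by nlinarith))
  have hdecay : Tendsto (fun t => Real.exp (a.re * (t - T)) * ‖x T‖) atTop (𝓝 0) := by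
    have hlin := (tendsto_id.atTop_add (tendsto_const_nhds (x := -T))).const_mul_atTop_of_neg ha
    simpa [sub_eq_add_neg] using (Real.tendsto_exp_atBot.comp hlin).mul_const ‖x T‖
  filter_upwards [eventually_ge_atTop T, hdecay.eventually (gt_mem_nhds (half_pos hε))]
    with t hTt hdecay_t
  calc ‖x t‖ ≤ Real.exp (a.re * (t - T)) * ‖x T‖ + -a.re * (ε / 2) / -a.re :=
        norm_le_exp_mul_add_of_hasDerivAt_smul_add ha hx (fun s hs => (hT s hs).le) hTt
    _ < ε / 2 + ε / 2 := by rw [mul_div_cancel_left₀ _ (neg_ne_zero.2 ha.ne)]; linarith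
    _ = ε := add_halves ε

lemma tendsto_zero_of_aeval_prod_X_sub_C_apply_eq_zero {E : Type*} [NormedAddCommGroup E]
    [NormedSpace ℂ E] [FiniteDimensional ℂ E] (f : Module.End ℂ E) {s : Multiset ℂ}
    (hs : ∀ μ ∈ s, μ.re < 0) {x u : ℝ → E} (hx : ∀ t, HasDerivAt x (f (x t) + u t) t)
    (hu : Tendsto u atTop (𝓝 0)) (hann : ∀ t, aeval f (s.map (fun μ => X - C μ)).prod (x t) = 0) :
    Tendsto x atTop (𝓝 0) := by
  induction s using Multiset.induction_on generalizing x u with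
  | empty =>
    have hx0 : x = 0 := funext fun t => by simpa using hann t
    rw [hx0]
    exact tendsto_const_nhds
  | cons μ s ih =>
    obtain ⟨g, hg_def⟩ : ∃ g : Module.End ℂ E, aeval f (X - C μ) = g := ⟨_, rfl⟩
    have hg : ∀ y, g y = f y - μ • y := fun y => by simp [← hg_def]
    have hgf : ∀ y, g (f y) = f (g y) := fun y => by simp only [hg, map_sub, map_smul]
    have hz : ∀ t, HasDerivAt (fun s => g (x s)) (f (g (x t)) + g (u t)) t := fun t => by
      rw [← hgf, ← map_add]
      exact ((LinearMap.toContinuousLinearMap g).restrictScalars ℝ).hasFDerivAt.comp_hasDerivAt t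
        (hx t)
    have hgu : Tendsto (fun t => g (u t)) atTop (𝓝 0) := by
      simpa [Function.comp_def] using
        ((LinearMap.continuous_of_finiteDimensional g).tendsto 0).comp hu
    have hgx : Tendsto (fun t => g (x t)) atTop (𝓝 0) := by
      refine ih (fun ν hν => hs ν (Multiset.mem_cons_of_mem hν)) hz hgu fun t => ?_
      have := hann t
      rwa [Multiset.map_cons, Multiset.prod_cons, mul_comm, map_mul, hg_def,
        Module.End.mul_apply] at this
    refine tendsto_zero_of_hasDerivAt_smul_add (hs μ (Multiset.mem_cons_self μ s))
      (fun t => (hx t).congr_deriv ?_) (by simpa using hgx.add hu)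
    rw [hg]
    abel

lemma tendsto_zero_of_hasDerivAt_of_spectrum_re_neg {E : Type*} [NormedAddCommGroup E]
    [NormedSpace ℂ E] [FiniteDimensional ℂ E] (f : Module.End ℂ E)
    (hf : ∀ μ ∈ spectrum ℂ f, μ.re < 0) {x u : ℝ → E}
    (hx : ∀ t, HasDerivAt x (f (x t) + u t) t) (hu : Tendsto u atTop (𝓝 0)) :
    Tendsto x atTop (𝓝 0) := by
  refine tendsto_zero_of_aeval_prod_X_sub_C_apply_eq_zero f (s := f.charpoly.roots)
    (fun μ hμ => hf μ ?_) hx hu fun t => ?_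
  · exact (Module.End.mem_spectrum_iff_isRoot_charpoly f μ).2 (mem_roots'.1 hμ).2
  · rw [← (IsAlgClosed.splits f.charpoly).eq_prod_roots_of_monic f.charpoly_monic,
      LinearMap.aeval_self_charpoly, LinearMap.zero_apply]

lemma IsHurwitz.tendsto_zero_of_hasDerivAt {n : ℕ} {A : Matrix (Fin n) (Fin n) ℝ}
    (hA : IsHurwitz A) {x u : ℝ → Fin n → ℝ} (hx : ∀ t, HasDerivAt x (A *ᵥ x t + u t) t)
    (hu : Tendsto u atTop (𝓝 0)) : Tendsto x atTop (𝓝 0) := by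
  have hz : ∀ t, HasDerivAt (fun s i => (x s i : ℂ))
      ((A.map Complex.ofReal).toLin' (fun i => (x t i : ℂ)) + fun i => (u t i : ℂ)) t :=
    fun t => hasDerivAt_pi.2 fun i => by
      refine ((hasDerivAt_pi.1 (hx t) i).ofReal_comp).congr_deriv ?_
      simp only [Pi.add_apply, Complex.ofReal_add, toLin'_apply]
      exact congrArg (· + _) (RingHom.map_mulVec Complex.ofRealHom A (x t) i)
  have hzu : Tendsto (fun t i => (u t i : ℂ)) atTop (𝓝 0) := by
    simpa [Function.comp_def, Pi.zero_def] using
      ((continuous_pi fun i => Complex.continuous_ofReal.comp (continuous_apply i)).tendsto 0).comp hu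
  have hzx := tendsto_zero_of_hasDerivAt_of_spectrum_re_neg _
    (fun μ hμ => hA μ (Matrix.spectrum_toLin' (A.map Complex.ofReal) ▸ hμ)) hz hzu
  simpa [Function.comp_def, Pi.zero_def] using
    ((continuous_pi fun i => Complex.continuous_re.comp (continuous_apply i)).tendsto 0).comp hzx

lemma HasDerivAt.const_mulVec {𝕜 m n : Type*} [NontriviallyNormedField 𝕜] [CompleteSpace 𝕜]
    [Fintype m] [Fintype n] (A : Matrix m n 𝕜) {f : 𝕜 → n → 𝕜} {f' : n → 𝕜} {t : 𝕜}
    (hf : HasDerivAt f f' t) : HasDerivAt (fun s => A *ᵥ f s) (A *ᵥ f') t :=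
  (LinearMap.toContinuousLinearMap A.mulVecLin).hasFDerivAt.comp_hasDerivAt t hf

lemma Filter.Tendsto.const_mulVec {α R m n : Type*} [Fintype n] [NonUnitalNonAssocSemiring R]
    [TopologicalSpace R] [IsTopologicalSemiring R] {l : Filter α} (A : Matrix m n R)
    {f : α → n → R} {a : n → R} (hf : Tendsto f l (𝓝 a)) :
    Tendsto (fun s => A *ᵥ f s) l (𝓝 (A *ᵥ a)) :=
  ((continuous_const.matrix_mulVec continuous_id).tendsto a).comp hf

theorem output_regulation_vanishing_perturbation_general
    {nc q p m : ℕ}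
    (Ac : Matrix (Fin nc) (Fin nc) ℝ) (Bc : Matrix (Fin nc) (Fin q) ℝ)
    (Cc : Matrix (Fin p) (Fin nc) ℝ) (Dc : Matrix (Fin p) (Fin q) ℝ)
    (S : Matrix (Fin q) (Fin q) ℝ)
    (B : Matrix (Fin nc) (Fin nc) ℝ) (D : Matrix (Fin p) (Fin m) ℝ)
    (hAc : IsHurwitz Ac)
    (Xc : Matrix (Fin nc) (Fin q) ℝ)
    (hX1 : Xc * S = Ac * Xc + Bc)
    (hX2 : (0 : Matrix (Fin p) (Fin q) ℝ) = Cc * Xc + Dc)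
    (δ : ℝ → Fin nc → ℝ) (δu : ℝ → Fin m → ℝ)
    (hδ : Tendsto δ atTop (𝓝 0)) (hδu : Tendsto δu atTop (𝓝 0))
    (xc : ℝ → Fin nc → ℝ) (v : ℝ → Fin q → ℝ) (e : ℝ → Fin p → ℝ)
    (hxc : ∀ t, HasDerivAt xc (Ac.mulVec (xc t) + Bc.mulVec (v t) + B.mulVec (δ t)) t)
    (hv : ∀ t, HasDerivAt v (S.mulVec (v t)) t)
    (he : ∀ t, e t = Cc.mulVec (xc t) + Dc.mulVec (v t) + D.mulVec (δu t)) :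
    Tendsto e atTop (𝓝 0) := by
  have hx : ∀ t, HasDerivAt (fun s => xc s - Xc *ᵥ v s)
      (Ac *ᵥ (xc t - Xc *ᵥ v t) + B *ᵥ δ t) t :=
    fun t => ((hxc t).sub ((hv t).const_mulVec Xc)).congr_deriv <| by
      rw [mulVec_mulVec, hX1, add_mulVec, ← mulVec_mulVec, mulVec_sub]
      abel
  have hx0 := hAc.tendsto_zero_of_hasDerivAt hx (by simpa using hδ.const_mulVec B)
  have he' : e = fun t => Cc *ᵥ (xc t - Xc *ᵥ v t) + D *ᵥ δu t := funext fun t => by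
    rw [he, mulVec_sub, mulVec_mulVec, eq_neg_of_add_eq_zero_right hX2.symm, neg_mulVec]
    abel
  rw [he']
  simpa using (hx0.const_mulVec Cc).add (hδu.const_mulVec D)

/-- Robustness of output regulation to vanishing perturbations: if `X_c`
solves the Sylvester-type equations and `A_c` is Hurwitz, then the perturbed
closed-loop system with vanishing inputs `δ, δ_u` still regulates the error. -/
theorem output_regulation_vanishing_perturbation
    {nc q p m : ℕ}
    (Ac : Matrix (Fin nc) (Fin nc) ℝ) (Bc : Matrix (Fin nc) (Fin q) ℝ)
    (Cc : Matrix (Fin p) (Fin nc) ℝ) (Dc : Matrix (Fin p) (Fin q) ℝ)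
    (S : Matrix (Fin q) (Fin q) ℝ)
    (B : Matrix (Fin nc) (Fin nc) ℝ) (D : Matrix (Fin p) (Fin m) ℝ)
    (hAc : IsHurwitz Ac)
    (Xc : Matrix (Fin nc) (Fin q) ℝ)
    (hX1 : Xc * S = Ac * Xc + Bc)
    (hX2 : (0 : Matrix (Fin p) (Fin q) ℝ) = Cc * Xc + Dc)
    (δ : ℝ → Fin nc → ℝ) (δu : ℝ → Fin m → ℝ)
    (hδ_cont : Continuous δ) (hδu_cont : Continuous δu)
    (hδ : Tendsto δ atTop (𝓝 0)) (hδu : Tendsto δu atTop (𝓝 0))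
    (xc : ℝ → Fin nc → ℝ) (v : ℝ → Fin q → ℝ) (e : ℝ → Fin p → ℝ)
    (hxc : ∀ t, HasDerivAt xc (Ac.mulVec (xc t) + Bc.mulVec (v t) + B.mulVec (δ t)) t)
    (hv : ∀ t, HasDerivAt v (S.mulVec (v t)) t)
    (he : ∀ t, e t = Cc.mulVec (xc t) + Dc.mulVec (v t) + D.mulVec (δu t)) :
    Tendsto e atTop (𝓝 0) :=
  output_regulation_vanishing_perturbation_general Ac Bc Cc Dc S B D hAc Xc hX1 hX2 δ δu hδ hδu xc v
    e hxc hv he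
end
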